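/- For every a > 0, f(a) = ∫₀^∞ sinh(a+t)·(sinh(2a+2t)/√(sinh²(2a+2t) - sinh²(2a)) - 1) dt is a well-defined (finite) convergent improper integral, and f(a) < K·cosh(a), where K = ∫₀¹ (1/x²)(1/√(1-x⁴) - 1) dx. -/

import Mathlib

/-!
Substituting `x = cosh a / cosh (a + t)` maps `(0, ∞)` onto `(0, 1)` and turns `f a` into
`∫₀¹ (c / x²) (√(R c x) - 1) dx`, where `c = cosh a` and
`R c x = (c² - x²) / ((1 - x²) (c² + (c² - 1) x²))`. Since the denominator of `R c x` equals
`(c² - x²) - (c² - 1) x⁴`, one has `1 ≤ R c x < 1 / (1 - x⁴)`, so the new integrand is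
nonnegative and strictly below `c` times the integrand of `Kc`, which is integrable because it
is `O((1 - x)^(-1/2))`.
-/

open Real MeasureTheory

noncomputable def Kc : ℝ :=
  ∫ x in Set.Ioo (0:ℝ) 1, (1/x^2) * (1 / Real.sqrt (1 - x^4) - 1)

open Set

noncomputable def kcIntegrand (x : ℝ) : ℝ := 1 / x ^ 2 * (1 / √(1 - x ^ 4) - 1)

lemma kcIntegrand_nonneg {x : ℝ} (hx : x ∈ Ioo 0 1) : 0 ≤ kcIntegrand x := by
  have h4 : 0 < 1 - x ^ 4 := by nlinarith [pow_lt_one₀ hx.1.le hx.2 (n := 4) (by norm_num)]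
  have : √(1 - x ^ 4) ≤ 1 := sqrt_le_one.2 (by nlinarith [pow_nonneg hx.1.le 4])
  unfold kcIntegrand
  have : 1 ≤ 1 / √(1 - x ^ 4) := by rw [le_div_iff₀ (sqrt_pos.2 h4)]; linarith
  exact mul_nonneg (by positivity) (by linarith)

lemma kcIntegrand_le {x : ℝ} (hx : x ∈ Ioo 0 1) :
    kcIntegrand x ≤ (1 - x) ^ (-(1/2) : ℝ) := by
  obtain ⟨hx0, hx1⟩ := hx
  have hx4 : x ^ 4 ≤ x := pow_le_of_le_one hx0.le hx1.le (by norm_num)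
  have h4 : 0 < 1 - x ^ 4 := by linarith
  set r := √(1 - x ^ 4) with hr
  have hr0 : 0 < r := sqrt_pos.2 h4
  have hr1 : r ≤ 1 := sqrt_le_one.2 (by nlinarith [pow_nonneg hx0.le 4])
  have hrsq : r ^ 2 = 1 - x ^ 4 := sq_sqrt h4.le
  calc kcIntegrand x = (1 - r) / (x ^ 2 * r) := by
        unfold kcIntegrand; rw [← hr]; field_simp
    _ ≤ x ^ 4 / (x ^ 2 * r) := by gcongr; nlinarith
    _ = x ^ 2 / r := by field_simp
    _ ≤ 1 / r := by gcongr; nlinarith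
    _ ≤ 1 / √(1 - x) := by rw [hr]; gcongr
    _ = (1 - x) ^ (-(1/2) : ℝ) := by
        rw [rpow_neg (by linarith), sqrt_eq_rpow, one_div]

lemma integrableOn_kcIntegrand : IntegrableOn kcIntegrand (Ioo 0 1) := by
  have hmaj : IntegrableOn (fun x : ℝ => (1 - x) ^ (-(1/2) : ℝ)) (Ioo 0 1) := by
    have h := (intervalIntegral.intervalIntegrable_rpow' (a := 0) (b := 1)
      (r := -(1/2)) (by norm_num)).comp_sub_left 1
    simp only [sub_zero, sub_self] at h
    exact (intervalIntegrable_iff_integrableOn_Ioo_of_le zero_le_one).1 h.symm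
  refine hmaj.mono' (by unfold kcIntegrand; fun_prop) ((ae_restrict_iff' measurableSet_Ioo).2 ?_)
  filter_upwards with x hx
  rw [norm_of_nonneg (kcIntegrand_nonneg hx)]
  exact kcIntegrand_le hx

noncomputable def substRatio (c x : ℝ) : ℝ :=
  (c ^ 2 - x ^ 2) / ((1 - x ^ 2) * (c ^ 2 + (c ^ 2 - 1) * x ^ 2))

noncomputable def substIntegrand (c x : ℝ) : ℝ := c / x ^ 2 * (√(substRatio c x) - 1)

lemma substRatio_mem_Ico {c x : ℝ} (hc : 1 < c) (hx : x ∈ Ioo 0 1) :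
    substRatio c x ∈ Ico 1 (1 / (1 - x ^ 4)) := by
  obtain ⟨hx0, hx1⟩ := hx
  have hx2 : x ^ 2 < 1 := pow_lt_one₀ hx0.le hx1 (by norm_num)
  have hx4 : 0 < x ^ 4 := by positivity
  have hD : (1 - x ^ 2) * (c ^ 2 + (c ^ 2 - 1) * x ^ 2) = (c ^ 2 - x ^ 2) - (c ^ 2 - 1) * x ^ 4 :=
    by ring
  have hc2 : 0 < c ^ 2 - 1 := by nlinarith
  have hDpos : 0 < (c ^ 2 - x ^ 2) - (c ^ 2 - 1) * x ^ 4 := by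
    rw [← hD]; exact mul_pos (by linarith) (by positivity)
  rw [substRatio, mem_Ico, hD, one_le_div hDpos, div_lt_div_iff₀ hDpos (by nlinarith)]
  constructor <;> nlinarith [mul_pos hc2 hx4]

lemma substIntegrand_nonneg {c x : ℝ} (hc : 1 < c) (hx : x ∈ Ioo 0 1) :
    0 ≤ substIntegrand c x := by
  have := one_le_sqrt.2 (substRatio_mem_Ico hc hx).1
  exact mul_nonneg (by have := hx.1; positivity) (by linarith)

lemma substIntegrand_lt {c x : ℝ} (hc : 1 < c) (hx : x ∈ Ioo 0 1) :
    substIntegrand c x < c * kcIntegrand x := by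
  have hx0 := hx.1
  have hR := substRatio_mem_Ico hc hx
  have hlt : √(substRatio c x) < 1 / √(1 - x ^ 4) := by
    rw [one_div, ← sqrt_inv, ← one_div]
    exact sqrt_lt_sqrt (by linarith [hR.1]) hR.2
  rw [substIntegrand, kcIntegrand, ← mul_assoc, mul_one_div]
  gcongr

lemma integrableOn_substIntegrand {c : ℝ} (hc : 1 < c) :
    IntegrableOn (substIntegrand c) (Ioo 0 1) := by
  refine (integrableOn_kcIntegrand.const_mul c).mono'
    (by unfold substIntegrand substRatio; fun_prop) ((ae_restrict_iff' measurableSet_Ioo).2 ?_)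
  filter_upwards with x hx
  rw [norm_of_nonneg (substIntegrand_nonneg hc hx)]
  exact (substIntegrand_lt hc hx).le

theorem setIntegral_lt_setIntegral_of_forall_lt {X : Type*} [MeasurableSpace X] {μ : Measure X}
    {s : Set X} {f g : X → ℝ} (hs : MeasurableSet s) (hμs : μ s ≠ 0)
    (hf : IntegrableOn f s μ) (hg : IntegrableOn g s μ) (hlt : ∀ x ∈ s, f x < g x) :
    ∫ x in s, f x ∂μ < ∫ x in s, g x ∂μ := by
  rw [← sub_pos, ← integral_sub hg hf, setIntegral_pos_iff_support_of_nonneg_ae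
    ((ae_restrict_iff' hs).2 (ae_of_all _ fun x hx => (sub_pos.2 (hlt x hx)).le)) (hg.sub hf)]
  have : s ⊆ Function.support (g - f) ∩ s := fun x hx => ⟨(sub_pos.2 (hlt x hx)).ne', hx⟩
  exact (pos_iff_ne_zero.2 hμs).trans_le (measure_mono this)

lemma integral_substIntegrand_lt {c : ℝ} (hc : 1 < c) :
    ∫ x in Ioo 0 1, substIntegrand c x < Kc * c := by
  rw [show Kc = ∫ x in Ioo 0 1, kcIntegrand x from rfl, mul_comm, ← integral_const_mul]
  exact setIntegral_lt_setIntegral_of_forall_lt measurableSet_Ioo (by simp)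
    (integrableOn_substIntegrand hc) (integrableOn_kcIntegrand.const_mul c)
    fun x hx => substIntegrand_lt hc hx

noncomputable def fIntegrand (a t : ℝ) : ℝ :=
  sinh (a + t) * (sinh (2 * a + 2 * t) / √(sinh (2 * a + 2 * t) ^ 2 - sinh (2 * a) ^ 2) - 1)

lemma hasDerivAt_cosh_div_cosh_add (a t : ℝ) :
    HasDerivAt (fun t => cosh a / cosh (a + t))
      (-(cosh a * sinh (a + t)) / cosh (a + t) ^ 2) t := by
  have h := ((hasDerivAt_id t).const_add a).cosh
  refine ((hasDerivAt_const t (cosh a)).fun_div h (cosh_pos _).ne').congr_deriv ?_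
  simp

lemma strictAntiOn_cosh_div_cosh_add {a : ℝ} (ha : 0 ≤ a) :
    StrictAntiOn (fun t => cosh a / cosh (a + t)) (Ioi 0) := fun u hu v hv huv =>
  div_lt_div_of_pos_left (cosh_pos a) (cosh_pos _) <|
    cosh_strictMonoOn (by simp only [mem_Ici]; linarith [mem_Ioi.1 hu])
      (by simp only [mem_Ici]; linarith [mem_Ioi.1 hv]) (by linarith)

lemma image_cosh_div_cosh_add {a : ℝ} (ha : 0 ≤ a) :
    (fun t => cosh a / cosh (a + t)) '' Ioi 0 = Ioo 0 1 := by
  ext x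
  constructor
  · rintro ⟨t, ht, rfl⟩
    refine ⟨by positivity, (div_lt_one (cosh_pos _)).2 ?_⟩
    exact cosh_strictMonoOn (mem_Ici.2 ha) (by simp only [mem_Ici]; linarith [mem_Ioi.1 ht])
      (by linarith [mem_Ioi.1 ht])
  · rintro ⟨hx0, hx1⟩
    have hcx : cosh a < cosh a / x := by rw [lt_div_iff₀ hx0]; nlinarith [cosh_pos a]
    have hcx1 : 1 ≤ cosh a / x := (one_le_cosh a).trans hcx.le
    refine ⟨arcosh (cosh a / x) - a, ?_, ?_⟩
    · have := strictMonoOn_arcosh (cosh_pos a) (by positivity : (0 : ℝ) < cosh a / x) hcx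
      rw [arcosh_cosh ha] at this
      exact sub_pos.2 this
    · simp only [add_sub_cancel, cosh_arcosh hcx1]
      field_simp

lemma fIntegrand_eq {a t : ℝ} (ha : 0 < a) (ht : 0 < t) :
    |-(cosh a * sinh (a + t)) / cosh (a + t) ^ 2| * substIntegrand (cosh a) (cosh a / cosh (a + t))
      = fIntegrand a t := by
  rw [fIntegrand, ← mul_add, sinh_two_mul, sinh_two_mul]
  set c := cosh a
  set s := cosh (a + t)
  set sh := sinh (a + t)
  have hc : 1 < c := one_lt_cosh.2 ha.ne'
  have hcs : c < s := cosh_strictMonoOn (mem_Ici.2 ha.le) (by simp only [mem_Ici]; linarith)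
    (by linarith)
  have hs : 0 < s := cosh_pos _
  have hsh : 0 < sh := sinh_pos_iff.2 (by linarith)
  have hsh2 : sh ^ 2 = s ^ 2 - 1 := by rw [cosh_sq]; ring
  have hsa2 : sinh a ^ 2 = c ^ 2 - 1 := by rw [cosh_sq]; ring
  have hsc : s ^ 2 - c ^ 2 ≠ 0 := by nlinarith
  have hsc' : s ^ 2 + c ^ 2 - 1 ≠ 0 := by nlinarith
  have hratio :
      substRatio c (c / s) = (2 * sh * s) ^ 2 / ((2 * sh * s) ^ 2 - (2 * sinh a * c) ^ 2) := by
    have hdiff :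
        (2 * sh * s) ^ 2 - (2 * sinh a * c) ^ 2 = 4 * (s ^ 2 - c ^ 2) * (s ^ 2 + c ^ 2 - 1) := by
      linear_combination (4 * s ^ 2) * hsh2 - (4 * c ^ 2) * hsa2
    have hx : (1 - (c / s) ^ 2) * (c ^ 2 + (c ^ 2 - 1) * (c / s) ^ 2) ≠ 0 := by
      have h1 : 0 < 1 - (c / s) ^ 2 := by
        rw [div_pow, sub_pos, div_lt_one (by positivity)]; nlinarith
      have h2 : 0 < c ^ 2 - 1 := by nlinarith
      positivity
    rw [substRatio, hdiff, mul_pow, mul_pow, hsh2, div_eq_div_iff hx (by simp [hsc, hsc'])]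
    field_simp
    ring
  rw [substIntegrand, hratio, sqrt_div (sq_nonneg _), sqrt_sq (by positivity), abs_div, abs_neg,
    abs_of_pos (by positivity), abs_of_pos (by positivity)]
  field_simp

lemma integrableOn_fIntegrand_and_integral_eq {a : ℝ} (ha : 0 < a) :
    IntegrableOn (fIntegrand a) (Ioi 0) ∧
      ∫ t in Ioi 0, fIntegrand a t = ∫ x in Ioo 0 1, substIntegrand (cosh a) x := by
  have hderiv (t : ℝ) (_ : t ∈ Ioi 0) : HasDerivWithinAt (fun t => cosh a / cosh (a + t))
      (-(cosh a * sinh (a + t)) / cosh (a + t) ^ 2) (Ioi 0) t :=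
    (hasDerivAt_cosh_div_cosh_add a t).hasDerivWithinAt
  have hinj := (strictAntiOn_cosh_div_cosh_add ha.le).injOn
  have hsubst : EqOn (fun t => |-(cosh a * sinh (a + t)) / cosh (a + t) ^ 2| •
      substIntegrand (cosh a) (cosh a / cosh (a + t))) (fIntegrand a) (Ioi 0) :=
    fun _ ht => fIntegrand_eq ha ht
  rw [← image_cosh_div_cosh_add ha.le, integral_image_eq_integral_abs_deriv_smul measurableSet_Ioi
    hderiv hinj, setIntegral_congr_fun measurableSet_Ioi hsubst]
  refine ⟨?_, rfl⟩
  refine IntegrableOn.congr_fun ?_ hsubst measurableSet_Ioi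
  rw [← integrableOn_image_iff_integrableOn_abs_deriv_smul measurableSet_Ioi hderiv hinj,
    image_cosh_div_cosh_add ha.le]
  exact integrableOn_substIntegrand (one_lt_cosh.2 ha.ne')

theorem f_integrable_and_lt (a : ℝ) (ha : 0 < a) :
    IntegrableOn (fun t : ℝ =>
      Real.sinh (a+t) *
        (Real.sinh (2*a+2*t) / Real.sqrt (Real.sinh (2*a+2*t)^2 - Real.sinh (2*a)^2) - 1))
      (Set.Ioi (0:ℝ)) ∧
    (∫ t in Set.Ioi (0:ℝ),
      Real.sinh (a+t) *
        (Real.sinh (2*a+2*t) / Real.sqrt (Real.sinh (2*a+2*t)^2 - Real.sinh (2*a)^2) - 1))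
      < Kc * Real.cosh a := by
  obtain ⟨hint, heq⟩ := integrableOn_fIntegrand_and_integral_eq ha
  exact ⟨hint, heq ▸ integral_substIntegrand_lt (one_lt_cosh.2 ha.ne')⟩
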